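/- Let a ∈ ℝ, let I_f be an interval with least element a, nonempty interior, and I_f ⊂ [a,∞), let Ω ⊂ ℝ^m be a nonempty open set, let α = (α₁,…,α_m) ∈ (0,1]^m, let q_a ∈ Ω, and let f : Ω × I_f → ℝ^m be a Carathéodory function. Then every local solution (q,I) of the Caputo Cauchy problem ( _cD^{α_i}_{a+}[q_i] = f_i(q(·),·) a.e., q(a) = q_a ) can be extended to a maximal solution: there exists a maximal solution (q*,I*) with I ⊂ I* and q* = q on I. -/

import Mathlib

open MeasureTheory Set

/-- Left Riemann–Liouville fractional integral of order `α` with base point `a`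
(for `α = 0` it is the identity). -/
noncomputable def rlInt (a α : ℝ) (q : ℝ → ℝ) (t : ℝ) : ℝ :=
  if α = 0 then q t else (1 / Real.Gamma α) * ∫ τ in a..t, (t - τ) ^ (α - 1) * q τ

/-- `I` is an interval with least element `a`, nonempty interior, and `I ⊆ [a,∞)`. -/
def IsIntervalFrom (a : ℝ) (I : Set ℝ) : Prop :=
  a ∈ I ∧ I ⊆ Set.Ici a ∧ (interior I).Nonempty ∧ I.OrdConnected

/-- `(q, I)` is a local solution of the Caputo Cauchy problem
`_cD^{α_i}_{a+}[q_i] = F_i(q(·),·)` a.e., `q(a) = qa`, on the domain `Ω`: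
`I ⊆ If` is an interval with least element `a` and nonempty interior, `q` is continuous
on `I` with values in `Ω` and `q(a) = qa`, and for each `i` the function
`I^{1-α_i}_{a+}[q_i - (qa)_i]` agrees a.e. on `I` with a locally absolutely continuous
function `t ↦ c + ∫_a^t h` whose derivative `h` (the Caputo fractional derivative of
`q_i`) equals `F_i(q(t), t)` for almost every `t ∈ I`. -/
def IsCaputoLocalSol (a : ℝ) (If : Set ℝ) {m : ℕ}
    (Ω : Set (EuclideanSpace ℝ (Fin m))) (α : Fin m → ℝ)
    (qa : EuclideanSpace ℝ (Fin m))
    (F : EuclideanSpace ℝ (Fin m) → ℝ → EuclideanSpace ℝ (Fin m))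
    (q : ℝ → EuclideanSpace ℝ (Fin m)) (I : Set ℝ) : Prop :=
  IsIntervalFrom a I ∧ I ⊆ If ∧ ContinuousOn q I ∧ (∀ t ∈ I, q t ∈ Ω) ∧ q a = qa ∧
  ∀ i, ∃ c : ℝ, ∃ h : ℝ → ℝ,
    (∀ b ∈ I, MeasureTheory.IntegrableOn h (Set.Icc a b)) ∧
    (∀ᵐ t ∂(MeasureTheory.volume.restrict I),
      rlInt a (1 - α i) (fun τ => q τ i - qa i) t = c + ∫ τ in a..t, h τ) ∧
    (∀ᵐ t ∂(MeasureTheory.volume.restrict I), h t = F (q t) t i)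

/-- `(q, I)` is a maximal local solution of the Caputo Cauchy problem:
every extension `(q', I')` of it satisfies `I' = I`. -/
def IsMaximalSol (a : ℝ) (If : Set ℝ) {m : ℕ}
    (Ω : Set (EuclideanSpace ℝ (Fin m))) (α : Fin m → ℝ)
    (qa : EuclideanSpace ℝ (Fin m))
    (F : EuclideanSpace ℝ (Fin m) → ℝ → EuclideanSpace ℝ (Fin m))
    (q : ℝ → EuclideanSpace ℝ (Fin m)) (I : Set ℝ) : Prop :=
  IsCaputoLocalSol a If Ω α qa F q I ∧
  ∀ (q' : ℝ → EuclideanSpace ℝ (Fin m)) (I' : Set ℝ),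
    IsCaputoLocalSol a If Ω α qa F q' I' → I ⊆ I' → Set.EqOn q' q I → I' = I

open scoped Topology

/-! Local solutions, seen as partial maps ordered by extension, satisfy the hypothesis of Zorn's
lemma: the union of a chain of solutions is again a solution. Continuity survives because each
point of the union has a neighbourhood in it contained in a single member's domain. The a.e.
equations survive because a set whose trace on every `[a, t]` is null is itself null, and because
the constants of integration of two members agree on the smaller domain, which has positive
measure. -/

structure PartialMap (X Y : Type*) where
  toFun : X → Y
  domain : Set X

namespace PartialMap

variable {X Y : Type*}

instance : Preorder (PartialMap X Y) where
  le p p' := p.domain ⊆ p'.domain ∧ EqOn p'.toFun p.toFun p.domain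
  le_refl _ := ⟨subset_rfl, fun _ _ => rfl⟩
  le_trans _ _ _ h h' := ⟨h.1.trans h'.1, fun _ hx => (h'.2 (h.1 hx)).trans (h.2 hx)⟩

lemma toFun_eq_of_isChain {c : Set (PartialMap X Y)} (hc : IsChain (· ≤ ·) c)
    {p p' : PartialMap X Y} (hp : p ∈ c) (hp' : p' ∈ c) {x : X} (hx : x ∈ p.domain)
    (hx' : x ∈ p'.domain) : p.toFun x = p'.toFun x := by
  rcases hc.total hp hp' with h | h
  · exact (h.2 hx).symm
  · exact h.2 hx'

open Classical in
/-- The value outside the union of the domains is arbitrary. -/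
noncomputable def chainSup [Nonempty Y] (c : Set (PartialMap X Y)) : PartialMap X Y where
  toFun x := if h : ∃ p ∈ c, x ∈ p.domain then h.choose.toFun x else Classical.arbitrary Y
  domain := ⋃ p ∈ c, p.domain

lemma le_chainSup [Nonempty Y] {c : Set (PartialMap X Y)} (hc : IsChain (· ≤ ·) c)
    {p : PartialMap X Y} (hp : p ∈ c) : p ≤ chainSup c := by
  refine ⟨subset_biUnion_of_mem hp, fun x hx => ?_⟩
  have h : ∃ p ∈ c, x ∈ p.domain := ⟨p, hp, hx⟩
  simp only [chainSup, dif_pos h]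
  exact toFun_eq_of_isChain hc h.choose_spec.1 hp h.choose_spec.2 hx

end PartialMap

namespace IsIntervalFrom

variable {a : ℝ} {I J : Set ℝ} {ι : Type*} {s : Set ι} {K : ι → Set ℝ}

lemma Icc_subset (hI : IsIntervalFrom a I) {t : ℝ} (ht : t ∈ I) : Icc a t ⊆ I :=
  hI.2.2.2.out hI.1 ht

lemma measurableSet (hI : IsIntervalFrom a I) : MeasurableSet I :=
  hI.2.2.2.measurableSet

lemma restrict_volume_ne_zero (hI : IsIntervalFrom a I) : volume.restrict I ≠ 0 :=
  Measure.restrict_eq_zero.not.2 (Measure.measure_pos_of_nonempty_interior _ hI.2.2.1).ne'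

lemma subset_or_subset (hI : IsIntervalFrom a I) (hJ : IsIntervalFrom a J) : I ⊆ J ∨ J ⊆ I := by
  by_contra! h
  obtain ⟨x, hxI, hxJ⟩ := not_subset.mp h.1
  obtain ⟨y, hyJ, hyI⟩ := not_subset.mp h.2
  rcases le_total x y with hxy | hyx
  · exact hxJ (hJ.Icc_subset hyJ ⟨hI.2.1 hxI, hxy⟩)
  · exact hyI (hI.Icc_subset hxI ⟨hJ.2.1 hyJ, hyx⟩)

lemma biUnion (hs : s.Nonempty) (hK : ∀ i ∈ s, IsIntervalFrom a (K i)) :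
    IsIntervalFrom a (⋃ i ∈ s, K i) := by
  obtain ⟨i₀, hi₀⟩ := hs
  refine ⟨mem_biUnion hi₀ (hK i₀ hi₀).1, iUnion₂_subset fun i hi => (hK i hi).2.1,
    (hK i₀ hi₀).2.2.1.mono (interior_mono (subset_biUnion_of_mem hi₀)), ⟨?_⟩⟩
  intro x hx y hy
  obtain ⟨j, hj, hyj⟩ := mem_iUnion₂.mp hy
  obtain ⟨i, hi, hxi⟩ := mem_iUnion₂.mp hx
  exact (Icc_subset_Icc_left ((hK i hi).2.1 hxi)).trans
    (((hK j hj).Icc_subset hyj).trans (subset_biUnion_of_mem hj))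

/-- If some `u > t` lies in the union, the `K i` containing `u` contains `[a, u]`; otherwise the
whole union lies in `[a, t]`. -/
lemma exists_mem_nhdsWithin_biUnion (hK : ∀ i ∈ s, IsIntervalFrom a (K i)) {t : ℝ}
    (ht : t ∈ ⋃ i ∈ s, K i) : ∃ i ∈ s, t ∈ K i ∧ K i ∈ 𝓝[⋃ i ∈ s, K i] t := by
  obtain ⟨i, hi, hti⟩ := mem_iUnion₂.mp ht
  by_cases hmax : ∃ u ∈ ⋃ i ∈ s, K i, t < u
  · obtain ⟨u, hu, htu⟩ := hmax
    obtain ⟨j, hj, huj⟩ := mem_iUnion₂.mp hu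
    refine ⟨j, hj, (hK j hj).Icc_subset huj ⟨(hK i hi).2.1 hti, htu.le⟩,
      mem_nhdsWithin.2 ⟨Iio u, isOpen_Iio, htu, fun x ⟨hxu, hx⟩ => ?_⟩⟩
    obtain ⟨k, hk, hxk⟩ := mem_iUnion₂.mp hx
    exact (hK j hj).Icc_subset huj ⟨(hK k hk).2.1 hxk, le_of_lt hxu⟩
  · push Not at hmax
    refine ⟨i, hi, hti, Filter.mem_of_superset self_mem_nhdsWithin fun x hx => ?_⟩
    obtain ⟨k, hk, hxk⟩ := mem_iUnion₂.mp hx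
    exact (hK i hi).Icc_subset hti ⟨(hK k hk).2.1 hxk, hmax x hx⟩

end IsIntervalFrom

/-- Every point of `B` outside `B ∩ upperBounds B` (at most one point) lies below a rational
`r ≤ y` for some `y ∈ B`. -/
lemma measure_eq_zero_of_forall_inter_Iic {μ : Measure ℝ} [NullSingletonClass μ] {B : Set ℝ}
    (h : ∀ y ∈ B, μ (B ∩ Iic y) = 0) : μ B = 0 := by
  set R : Set ℚ := {r | ∃ y ∈ B, (r : ℝ) ≤ y}
  have hcover : B ⊆ (B ∩ upperBounds B) ∪ ⋃ r ∈ R, B ∩ Iic (r : ℝ) := by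
    intro x hx
    by_cases hup : x ∈ upperBounds B
    · exact Or.inl ⟨hx, hup⟩
    · obtain ⟨y, hy, hxy⟩ := not_forall₂.mp hup
      obtain ⟨r, hxr, hry⟩ := exists_rat_btwn (not_le.mp hxy)
      exact Or.inr (mem_biUnion (x := r) ⟨y, hy, hry.le⟩ ⟨hx, hxr.le⟩)
  have htop : (B ∩ upperBounds B).Subsingleton := fun x hx y hy =>
    le_antisymm (hy.2 hx.1) (hx.2 hy.1)
  refine measure_mono_null hcover (measure_union_null (htop.measure_zero μ) ?_)
  refine (measure_biUnion_null_iff R.to_countable).2 fun r ⟨y, hy, hry⟩ => ?_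
  exact measure_mono_null (inter_subset_inter_right _ (Iic_subset_Iic.2 hry)) (h y hy)

section AeOnUnion

variable {a : ℝ} {ι : Type*} {s : Set ι} {K : ι → Set ℝ}

lemma ae_restrict_biUnion_of_isIntervalFrom (hs : s.Nonempty)
    (hK : ∀ i ∈ s, IsIntervalFrom a (K i)) {P : ℝ → Prop}
    (hP : ∀ i ∈ s, ∀ᵐ t ∂volume.restrict (K i), P t) :
    ∀ᵐ t ∂volume.restrict (⋃ i ∈ s, K i), P t := by
  rw [ae_restrict_iff' (IsIntervalFrom.biUnion hs hK).measurableSet, ae_iff]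
  refine measure_eq_zero_of_forall_inter_Iic fun y hy => ?_
  obtain ⟨i, hi, hyi⟩ := mem_iUnion₂.mp (Classical.not_imp.mp hy).1
  have hnull := hP i hi
  rw [ae_restrict_iff' (hK i hi).measurableSet, ae_iff] at hnull
  refine measure_mono_null (fun t ⟨htB, hty⟩ => ?_) hnull
  obtain ⟨htU, hPt⟩ := Classical.not_imp.mp htB
  obtain ⟨k, hk, htk⟩ := mem_iUnion₂.mp htU
  exact Classical.not_imp.mpr ⟨(hK i hi).Icc_subset hyi ⟨(hK k hk).2.1 htk, hty⟩, hPt⟩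

lemma eq_of_ae_eq_add {X : Type*} [MeasurableSpace X] {μ : Measure X} (hμ : μ ≠ 0)
    {u v : X → ℝ} {c₁ c₂ : ℝ} (h₁ : ∀ᵐ t ∂μ, u t = c₁ + v t) (h₂ : ∀ᵐ t ∂μ, u t = c₂ + v t) :
    c₁ = c₂ := by
  have : (ae μ).NeBot := ae_neBot.2 hμ
  have hc : ∀ᵐ t ∂μ, c₁ = c₂ := by
    filter_upwards [h₁, h₂] with t ht₁ ht₂
    linarith
  exact hc.exists.choose_spec

lemma exists_ae_restrict_biUnion_eq_add (hs : s.Nonempty)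
    (hK : ∀ i ∈ s, IsIntervalFrom a (K i)) {u v : ℝ → ℝ}
    (h : ∀ i ∈ s, ∃ c : ℝ, ∀ᵐ t ∂volume.restrict (K i), u t = c + v t) :
    ∃ c : ℝ, ∀ᵐ t ∂volume.restrict (⋃ i ∈ s, K i), u t = c + v t := by
  choose! k hk using h
  obtain ⟨i₀, hi₀⟩ := hs
  refine ⟨k i₀, ae_restrict_biUnion_of_isIntervalFrom ⟨i₀, hi₀⟩ hK fun i hi => ?_⟩
  suffices hki : k i = k i₀ from hki ▸ hk i hi
  rcases (hK i hi).subset_or_subset (hK i₀ hi₀) with hsub | hsub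
  · exact eq_of_ae_eq_add (hK i hi).restrict_volume_ne_zero (hk i hi)
      (ae_restrict_of_ae_restrict_of_subset hsub (hk i₀ hi₀))
  · exact eq_of_ae_eq_add (hK i₀ hi₀).restrict_volume_ne_zero
      (ae_restrict_of_ae_restrict_of_subset hsub (hk i hi)) (hk i₀ hi₀)

end AeOnUnion

lemma rlInt_congr {a β t : ℝ} (hat : a ≤ t) {f g : ℝ → ℝ} (hfg : EqOn f g (Icc a t)) :
    rlInt a β f t = rlInt a β g t := by
  unfold rlInt
  split_ifs
  · exact hfg ⟨hat, le_rfl⟩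
  · congr 1
    refine intervalIntegral.integral_congr fun τ hτ => ?_
    rw [uIcc_of_le hat] at hτ
    simp only [hfg hτ]

/-- The Caputo derivative `h` in the definition of a local solution can be replaced by any `g`
equal to it a.e. on `I`, in particular by `t ↦ F_i(q(t), t)`. -/
lemma exists_ae_eq_add_integral_iff {a : ℝ} {I : Set ℝ} (hI : IsIntervalFrom a I)
    {u g : ℝ → ℝ} :
    (∃ c : ℝ, ∃ h : ℝ → ℝ, (∀ b ∈ I, IntegrableOn h (Icc a b)) ∧
      (∀ᵐ t ∂volume.restrict I, u t = c + ∫ τ in a..t, h τ) ∧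
      (∀ᵐ t ∂volume.restrict I, h t = g t)) ↔
    (∀ b ∈ I, IntegrableOn g (Icc a b)) ∧
      ∃ c : ℝ, ∀ᵐ t ∂volume.restrict I, u t = c + ∫ τ in a..t, g τ := by
  constructor
  · rintro ⟨c, h, hint, hu, hg⟩
    have hhg : ∀ b ∈ I, h =ᵐ[volume.restrict (Icc a b)] g := fun b hb =>
      ae_restrict_of_ae_restrict_of_subset (hI.Icc_subset hb) hg
    refine ⟨fun b hb => (hint b hb).congr (hhg b hb), c, ?_⟩
    filter_upwards [hu, ae_restrict_mem hI.measurableSet] with t ht htI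
    rw [ht, intervalIntegral.integral_congr_ae_restrict]
    rw [uIoc_of_le (hI.2.1 htI)]
    exact ae_restrict_of_ae_restrict_of_subset Ioc_subset_Icc_self (hhg t htI)
  · rintro ⟨hint, c, hu⟩
    exact ⟨c, g, hint, hu, Filter.Eventually.of_forall fun _ => rfl⟩

section Caputo

variable {a : ℝ} {If : Set ℝ} {m : ℕ} {Ω : Set (EuclideanSpace ℝ (Fin m))} {α : Fin m → ℝ}
  {qa : EuclideanSpace ℝ (Fin m)} {F : EuclideanSpace ℝ (Fin m) → ℝ → EuclideanSpace ℝ (Fin m)}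

open PartialMap in
lemma continuousOn_chainSup {Y : Type*} [TopologicalSpace Y] [Nonempty Y]
    {c : Set (PartialMap ℝ Y)} (hc : IsChain (· ≤ ·) c)
    (hK : ∀ p ∈ c, IsIntervalFrom a p.domain) (hcont : ∀ p ∈ c, ContinuousOn p.toFun p.domain) :
    ContinuousOn (chainSup c).toFun (chainSup c).domain := by
  intro t ht
  obtain ⟨p, hp, htp, hnhds⟩ := IsIntervalFrom.exists_mem_nhdsWithin_biUnion hK ht
  have hext := (le_chainSup hc hp).2
  exact ((hcont p hp t htp).congr hext (hext htp)).mono_of_mem_nhdsWithin hnhds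

open PartialMap in
lemma isCaputoLocalSol_chainSup {c : Set (PartialMap ℝ (EuclideanSpace ℝ (Fin m)))}
    (hc : IsChain (· ≤ ·) c) (hne : c.Nonempty)
    (hsol : ∀ p ∈ c, IsCaputoLocalSol a If Ω α qa F p.toFun p.domain) :
    IsCaputoLocalSol a If Ω α qa F (chainSup c).toFun (chainSup c).domain := by
  set Q := chainSup c
  have hK : ∀ p ∈ c, IsIntervalFrom a p.domain := fun p hp => (hsol p hp).1
  have hQ : ∀ p ∈ c, EqOn Q.toFun p.toFun p.domain := fun p hp => (le_chainSup hc hp).2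
  have hU : IsIntervalFrom a Q.domain := IsIntervalFrom.biUnion hne hK
  obtain ⟨p₀, hp₀⟩ := hne
  refine ⟨hU, iUnion₂_subset fun p hp => (hsol p hp).2.1,
    continuousOn_chainSup hc hK fun p hp => (hsol p hp).2.2.1, fun t ht => ?_,
    (hQ p₀ hp₀ (hK p₀ hp₀).1).trans (hsol p₀ hp₀).2.2.2.2.1, fun i => ?_⟩
  · obtain ⟨p, hp, htp⟩ := mem_iUnion₂.mp ht
    exact hQ p hp htp ▸ (hsol p hp).2.2.2.1 t htp
  have hcomp : ∀ p ∈ c, (∀ b ∈ p.domain, IntegrableOn (fun t => F (Q.toFun t) t i) (Icc a b)) ∧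
      ∃ k : ℝ, ∀ᵐ t ∂volume.restrict p.domain,
        rlInt a (1 - α i) (fun τ => Q.toFun τ i - qa i) t =
          k + ∫ τ in a..t, F (Q.toFun τ) τ i := by
    intro p hp
    obtain ⟨k, h, hint, hu, hh⟩ := (hsol p hp).2.2.2.2.2 i
    refine (exists_ae_eq_add_integral_iff (hK p hp)).1 ⟨k, h, hint, ?_, ?_⟩
    · filter_upwards [hu, ae_restrict_mem (hK p hp).measurableSet] with t ht htp
      rw [← ht]
      refine rlInt_congr ((hK p hp).2.1 htp) fun τ hτ => ?_
      simp only [hQ p hp ((hK p hp).Icc_subset htp hτ)]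
    · filter_upwards [hh, ae_restrict_mem (hK p hp).measurableSet] with t ht htp
      rw [ht, hQ p hp htp]
  refine (exists_ae_eq_add_integral_iff hU).2
    ⟨fun b hb => ?_, exists_ae_restrict_biUnion_eq_add ⟨p₀, hp₀⟩ hK fun p hp => (hcomp p hp).2⟩
  obtain ⟨p, hp, hbp⟩ := mem_iUnion₂.mp hb
  exact (hcomp p hp).1 b hbp

end Caputo

theorem statement15_general (a : ℝ) (If : Set ℝ) (m : ℕ) (Ω : Set (EuclideanSpace ℝ (Fin m)))
    (α : Fin m → ℝ) (qa : EuclideanSpace ℝ (Fin m))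
    (F : EuclideanSpace ℝ (Fin m) → ℝ → EuclideanSpace ℝ (Fin m)) :
    ∀ (q : ℝ → EuclideanSpace ℝ (Fin m)) (I : Set ℝ),
      IsCaputoLocalSol a If Ω α qa F q I →
      ∃ (qstar : ℝ → EuclideanSpace ℝ (Fin m)) (Istar : Set ℝ),
        IsMaximalSol a If Ω α qa F qstar Istar ∧ I ⊆ Istar ∧ Set.EqOn qstar q I := by
  intro q I hsol
  obtain ⟨M, hle, hM⟩ := zorn_le_nonempty₀
    {p : PartialMap ℝ (EuclideanSpace ℝ (Fin m)) | IsCaputoLocalSol a If Ω α qa F p.toFun p.domain}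
    (fun c hsub hc p hp => ⟨_, isCaputoLocalSol_chainSup hc ⟨p, hp⟩ hsub,
      fun _ hp' => PartialMap.le_chainSup hc hp'⟩) ⟨q, I⟩ hsol
  refine ⟨M.toFun, M.domain, ⟨hM.prop, fun q' I' hsol' hsub heq => ?_⟩, hle.1, hle.2⟩
  exact (hM.2 (y := ⟨q', I'⟩) hsol' ⟨hsub, heq⟩).1.antisymm hsub

theorem statement15 (a : ℝ) (If : Set ℝ)
    (haI : a ∈ If) (hIsub : If ⊆ Set.Ici a) (hIint : (interior If).Nonempty)
    (hIord : If.OrdConnected)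
    (m : ℕ) (hm : 0 < m) (Ω : Set (EuclideanSpace ℝ (Fin m)))
    (hΩopen : IsOpen Ω) (hΩne : Ω.Nonempty)
    (α : Fin m → ℝ) (hα : ∀ i, 0 < α i ∧ α i ≤ 1)
    (qa : EuclideanSpace ℝ (Fin m)) (hqa : qa ∈ Ω)
    (F : EuclideanSpace ℝ (Fin m) → ℝ → EuclideanSpace ℝ (Fin m))
    -- Carathéodory assumptions
    (hFmeas : ∀ x ∈ Ω, MeasureTheory.AEStronglyMeasurable (fun t => F x t)
      (MeasureTheory.volume.restrict If))
    (hFcont : ∀ᵐ t ∂(MeasureTheory.volume.restrict If), ContinuousOn (fun x => F x t) Ω) :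
    ∀ (q : ℝ → EuclideanSpace ℝ (Fin m)) (I : Set ℝ),
      IsCaputoLocalSol a If Ω α qa F q I →
      ∃ (qstar : ℝ → EuclideanSpace ℝ (Fin m)) (Istar : Set ℝ),
        IsMaximalSol a If Ω α qa F qstar Istar ∧ I ⊆ Istar ∧ Set.EqOn qstar q I :=
  statement15_general a If m Ω α qa F
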